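/- Let V be a finite set and σ a permutation of V. There exists a labeling ℓ of the edges of the complete graph on V with labels in {0,1,2} satisfying ℓ({σ(a),σ(b)}) ≡ ℓ({a,b}) + 1 (mod 3) for every edge {a,b} (i.e., a σ-partition exists) if and only if σ has at most one fixed point and every cycle of σ of length greater than 1 has length divisible by 3. -/
import Mathlib

/-- Auxiliary: a "phase" function on vertices that increases by 1 (mod 3) under σ
on non-fixed points, assuming every non-trivial cycle has length divisible by 3. -/
lemma exists_phase_aux {V : Type} [Fintype V] [DecidableEq V] (σ : Equiv.Perm V)
    (hdvd : ∀ v : V, σ v ≠ v → 3 ∣ (σ.cycleOf v).support.card) :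
    ∃ k : V → ZMod 3, ∀ v : V, σ v ≠ v → k (σ v) = k v + 1 := by
  classical
  letI : LinearOrder V := LinearOrder.lift' (Fintype.equivFin V) (Fintype.equivFin V).injective
  have hne : ∀ v : V, σ v ≠ v → ((σ.cycleOf v).support).Nonempty := fun v hv =>
    Equiv.Perm.support_cycleOf_nonempty.mpr hv
  set rep : V → V := fun v =>
    if h : σ v = v then v else ((σ.cycleOf v).support).min' (hne v h) with hrepdef
  have hrep_mem : ∀ v, (hv : σ v ≠ v) → rep v ∈ (σ.cycleOf v).support := by
    intro v hv
    simp only [hrepdef, dif_neg hv]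
    exact Finset.min'_mem _ _
  have hsame : ∀ v, (hv : σ v ≠ v) → Equiv.Perm.SameCycle σ (rep v) v := by
    intro v hv
    exact ((Equiv.Perm.mem_support_cycleOf_iff.mp (hrep_mem v hv)).1).symm
  have hcyc : ∀ v, (hv : σ v ≠ v) → σ.cycleOf (rep v) = σ.cycleOf v := by
    intro v hv
    exact ((hsame v hv).cycleOf_eq)
  have hex : ∀ v, σ v ≠ v → ∃ m : ℕ, (σ ^ m) (rep v) = v := by
    intro v hv
    obtain ⟨i, _, hi⟩ := (hsame v hv).exists_pow_eq'
    exact ⟨i, hi⟩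
  set kk : V → ℕ := fun v => if h : σ v ≠ v then Nat.find (hex v h) else 0 with hkkdef
  have hkk_spec : ∀ v, (hv : σ v ≠ v) → (σ ^ kk v) (rep v) = v := by
    intro v hv
    simp only [hkkdef, dif_pos hv]
    exact Nat.find_spec (hex v hv)
  have hkk_min : ∀ v, (hv : σ v ≠ v) → ∀ m, (σ ^ m) (rep v) = v → kk v ≤ m := by
    intro v hv m hm
    simp only [hkkdef, dif_pos hv]
    exact Nat.find_min' (hex v hv) hm
  -- reduction mod the cycle length, at the representative
  have hmod : ∀ v, (hv : σ v ≠ v) → ∀ m : ℕ,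
      (σ ^ (m % (σ.cycleOf v).support.card)) (rep v) = (σ ^ m) (rep v) := by
    intro v hv m
    have := σ.pow_mod_card_support_cycleOf_self_apply m (rep v)
    rwa [hcyc v hv] at this
  have hnpos : ∀ v : V, σ v ≠ v → 0 < (σ.cycleOf v).support.card := by
    intro v hv
    exact Finset.card_pos.mpr (hne v hv)
  have hlt : ∀ v, (hv : σ v ≠ v) → kk v < (σ.cycleOf v).support.card := by
    intro v hv
    have h1 : kk v ≤ kk v % (σ.cycleOf v).support.card := by
      apply hkk_min v hv
      rw [hmod v hv]
      exact hkk_spec v hv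
    exact lt_of_le_of_lt h1 (Nat.mod_lt _ (hnpos v hv))
  -- order of a point on its cycle
  have horder : ∀ v : V, σ v ≠ v → ∀ d : ℕ, (σ ^ d) v = v →
      (σ.cycleOf v).support.card ∣ d := by
    intro v hv d hd
    have hc : (σ.cycleOf v).IsCycle := σ.isCycle_cycleOf hv
    have hx : (σ.cycleOf v) v ≠ v := by
      rw [Equiv.Perm.cycleOf_apply_self]; exact hv
    have hpow : ((σ.cycleOf v) ^ d) v = v := by
      rw [Equiv.Perm.cycleOf_pow_apply_self]; exact hd
    have h1 : (σ.cycleOf v) ^ d = 1 := (hc.pow_eq_one_iff' hx).mpr hpow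
    have h2 : orderOf (σ.cycleOf v) ∣ d := orderOf_dvd_of_pow_eq_one h1
    rwa [hc.orderOf] at h2
  -- uniqueness of the exponent below the cycle length
  have huniq : ∀ v, (hv : σ v ≠ v) → ∀ j, j < (σ.cycleOf v).support.card →
      (σ ^ j) (rep v) = v → j = kk v := by
    intro v hv j hj hjv
    have h1 : kk v ≤ j := hkk_min v hv j hjv
    have h2 : (σ ^ (j - kk v)) v = v := by
      have : (σ ^ ((j - kk v) + kk v)) (rep v) = v := by
        rw [Nat.sub_add_cancel h1]; exact hjv
      rw [pow_add, Equiv.Perm.mul_apply, hkk_spec v hv] at this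
      exact this
    have h3 : (σ.cycleOf v).support.card ∣ (j - kk v) := horder v hv _ h2
    have h4 : j - kk v < (σ.cycleOf v).support.card := lt_of_le_of_lt (Nat.sub_le _ _) hj
    have h5 : j - kk v = 0 := Nat.eq_zero_of_dvd_of_lt h3 h4
    omega
  -- key: kk (σ v) = (kk v + 1) % n
  have hkey : ∀ v, (hv : σ v ≠ v) →
      kk (σ v) = (kk v + 1) % (σ.cycleOf v).support.card := by
    intro v hv
    have hv' : σ (σ v) ≠ σ v := fun h => hv (σ.injective h)
    have hrep_eq : rep (σ v) = rep v := by
      simp only [hrepdef, dif_neg hv, dif_neg hv', Equiv.Perm.cycleOf_self_apply]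
    have hn_eq : (σ.cycleOf (σ v)).support.card = (σ.cycleOf v).support.card := by
      rw [Equiv.Perm.cycleOf_self_apply]
    have hwit : (σ ^ ((kk v + 1) % (σ.cycleOf v).support.card)) (rep (σ v)) = σ v := by
      rw [hrep_eq, hmod v hv, pow_succ', Equiv.Perm.mul_apply, hkk_spec v hv]
    have := huniq (σ v) hv' _ (by rw [hn_eq]; exact Nat.mod_lt _ (hnpos v hv)) hwit
    exact this.symm
  refine ⟨fun v => (kk v : ZMod 3), ?_⟩
  intro v hv
  show ((kk (σ v) : ZMod 3)) = (kk v : ZMod 3) + 1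
  rw [hkey v hv]
  set n := (σ.cycleOf v).support.card with hn
  have h3n : (3 : ℕ) ∣ n := hdvd v hv
  have hzero : ((n : ℕ) : ZMod 3) = 0 := (ZMod.natCast_eq_zero_iff n 3).mpr h3n
  have hdecomp : (kk v + 1) % n + n * ((kk v + 1) / n) = kk v + 1 := Nat.mod_add_div _ _
  have := congrArg (fun m : ℕ => (m : ZMod 3)) hdecomp
  push_cast at this
  rw [hzero] at this
  simpa using this

/-- For a permutation σ of a finite set V, a σ-partition exists
iff σ has at most one fixed point and every cycle of σ of length greater than
one has length divisible by 3. -/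
theorem stmt_18 {V : Type} [Fintype V] [DecidableEq V] (σ : Equiv.Perm V) :
    (∃ ℓ : V → V → ZMod 3,
        (∀ a b : V, ℓ a b = ℓ b a) ∧
        (∀ a b : V, a ≠ b → ℓ (σ a) (σ b) = ℓ a b + 1)) ↔
    ((∀ v w : V, σ v = v → σ w = w → v = w) ∧
      ∀ v : V, σ v ≠ v → 3 ∣ (σ.cycleOf v).support.card) := by
  constructor
  · rintro ⟨ℓ, hsym, hshift⟩
    have key : ∀ (k : ℕ) (a b : V), a ≠ b → ℓ ((σ ^ k) a) ((σ ^ k) b) = ℓ a b + k := by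
      intro k
      induction k with
      | zero => simp
      | succ k ih =>
        intro a b hab
        have hne : (σ ^ k) a ≠ (σ ^ k) b := fun h => hab ((σ ^ k).injective h)
        have h1 : (σ ^ (k + 1)) a = σ ((σ ^ k) a) := by
          rw [pow_succ', Equiv.Perm.mul_apply]
        have h2 : (σ ^ (k + 1)) b = σ ((σ ^ k) b) := by
          rw [pow_succ', Equiv.Perm.mul_apply]
        rw [h1, h2, hshift _ _ hne, ih a b hab]
        push_cast
        ring
    constructor
    · intro v w hv hw
      by_contra h
      have := hshift v w h
      rw [hv, hw] at this
      have : (1 : ZMod 3) = 0 := by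
        have := left_eq_add.mp this
        exact this
      exact one_ne_zero this
    · intro v hv
      set n := (σ.cycleOf v).support.card with hn
      have h1 : (σ ^ n) v = v := by
        have := σ.pow_mod_card_support_cycleOf_self_apply n v
        rw [← hn, Nat.mod_self] at this
        simpa using this.symm
      have hvne : v ≠ σ v := fun h => hv h.symm
      have h2 : (σ ^ n) (σ v) = σ v := by
        have : (σ ^ n) (σ v) = σ ((σ ^ n) v) := by
          rw [← Equiv.Perm.mul_apply, ← Equiv.Perm.mul_apply, ← pow_succ, ← pow_succ']
        rw [this, h1]
      have h3 := key n v (σ v) hvne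
      rw [h1, h2] at h3
      have h4 : ((n : ℕ) : ZMod 3) = 0 := by
        have := left_eq_add.mp h3
        exact this
      exact (ZMod.natCast_eq_zero_iff n 3).mp h4
  · rintro ⟨hfix, hdvd⟩
    obtain ⟨k, hk⟩ := exists_phase_aux σ hdvd
    refine ⟨fun a b => if σ a = a then k b else if σ b = b then k a else 2 * (k a + k b),
      ?_, ?_⟩
    · intro a b
      by_cases ha : σ a = a <;> by_cases hb : σ b = b
      · have : a = b := hfix a b ha hb
        subst this
        rfl
      · simp [ha, hb]
      · simp [ha, hb]
      · simp only [ha, hb, if_neg, if_false]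
        ring
    · intro a b hab
      have hsa : σ (σ a) = σ a ↔ σ a = a := by
        constructor
        · intro h; exact σ.injective h
        · intro h; rw [h, h]
      have hsb : σ (σ b) = σ b ↔ σ b = b := by
        constructor
        · intro h; exact σ.injective h
        · intro h; rw [h, h]
      by_cases ha : σ a = a <;> by_cases hb : σ b = b
      · exact absurd (hfix a b ha hb) hab
      · simp only [if_pos (hsa.mpr ha), if_pos ha]
        exact hk b hb
      · simp only [if_neg (fun h => ha (hsa.mp h)), if_neg ha,
          if_pos (hsb.mpr hb), if_pos hb]
        exact hk a ha
      · simp only [if_neg (fun h => ha (hsa.mp h)), if_neg ha,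
          if_neg (fun h => hb (hsb.mp h)), if_neg hb]
        rw [hk a ha, hk b hb]
        have : ∀ x y : ZMod 3, 2 * ((x + 1) + (y + 1)) = 2 * (x + y) + 1 := by decide
        exact this _ _
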